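/- Let C be a category with an initial object k and binary coproducts, and let (H, Δ, ε, S) be a Zhang algebra of C. Then the antipode is involutive: S ∘ S = id_H. -/

import Mathlib

open CategoryTheory CategoryTheory.Limits

universe u v

/-!
The morphisms `H ⟶ X` form a monoid under convolution `f ⋆ g = Δ ≫ [f, g]` with unit `ε ≫ η`,
and postcomposition with any `h : X ⟶ Y` is multiplicative. Postcomposing `𝟙 ⋆ S = ε ≫ η` with
`S` gives `S ⋆ (S ≫ S) = ε ≫ η`, so `S ≫ S` is a right and `𝟙` a left convolution inverse of `S`,
and hence they are equal.
-/

namespace ZhangAlgebra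

variable {C : Type u} [Category.{v} C] [HasBinaryCoproducts C] {H X Y : C}

noncomputable def convolution (Δ : H ⟶ H ⨿ H) (f g : H ⟶ X) : H ⟶ X :=
  Δ ≫ coprod.desc f g

theorem convolution_comp (Δ : H ⟶ H ⨿ H) (f g : H ⟶ X) (h : X ⟶ Y) :
    convolution Δ f g ≫ h = convolution Δ (f ≫ h) (g ≫ h) := by
  simp only [convolution, Category.assoc, coprod.desc_comp]

theorem convolution_assoc (Δ : H ⟶ H ⨿ H)
    (hcoassoc : Δ ≫ coprod.map Δ (𝟙 H) ≫ (coprod.associator H H H).hom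
      = Δ ≫ coprod.map (𝟙 H) Δ) (f g h : H ⟶ X) :
    convolution Δ (convolution Δ f g) h = convolution Δ f (convolution Δ g h) := by
  have hdesc : coprod.desc (coprod.desc f g) h
      = (coprod.associator H H H).hom ≫ coprod.desc f (coprod.desc g h) := by
    apply coprod.hom_ext <;> [apply coprod.hom_ext; skip] <;>
      simp only [coprod.associator, coprod.inl_desc, coprod.inr_desc, coprod.inl_desc_assoc,
        coprod.inr_desc_assoc, Category.assoc]
  calc convolution Δ (convolution Δ f g) h
      = Δ ≫ coprod.map Δ (𝟙 H) ≫ coprod.desc (coprod.desc f g) h := by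
        simp only [convolution, coprod.map_desc, Category.id_comp]
    _ = (Δ ≫ coprod.map Δ (𝟙 H) ≫ (coprod.associator H H H).hom)
          ≫ coprod.desc f (coprod.desc g h) := by
        simp only [hdesc, Category.assoc]
    _ = convolution Δ f (convolution Δ g h) := by
        simp only [hcoassoc, convolution, Category.assoc, coprod.map_desc, Category.id_comp]

variable [HasInitial C]

theorem convolution_counit_left (Δ : H ⟶ H ⨿ H) (ε : H ⟶ ⊥_ C)
    (hcounit_l : Δ ≫ coprod.desc (ε ≫ initial.to H) (𝟙 H) = 𝟙 H) (g : H ⟶ X) :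
    convolution Δ (ε ≫ initial.to X) g = g := by
  calc convolution Δ (ε ≫ initial.to X) g
      = convolution Δ (ε ≫ initial.to H) (𝟙 H) ≫ g := by
        rw [convolution_comp, Category.assoc, initial.to_comp, Category.id_comp]
    _ = g := by rw [convolution, hcounit_l, Category.id_comp]

end ZhangAlgebra

open ZhangAlgebra in
theorem zhang_antipode_involutive_general
    {C : Type u} [Category.{v} C] [HasInitial C] [HasBinaryCoproducts C]
    (H : C) (Δ : H ⟶ H ⨿ H) (ε : H ⟶ ⊥_ C) (S : H ⟶ H)
    (hcoassoc : Δ ≫ coprod.map Δ (𝟙 H) ≫ (coprod.associator H H H).hom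
      = Δ ≫ coprod.map (𝟙 H) Δ)
    (hcounit_l : Δ ≫ coprod.desc (ε ≫ initial.to H) (𝟙 H) = 𝟙 H)
    (hcounit_r : Δ ≫ coprod.desc (𝟙 H) (ε ≫ initial.to H) = 𝟙 H)
    (hantipode_r : Δ ≫ coprod.desc (𝟙 H) S = ε ≫ initial.to H) :
    S ≫ S = 𝟙 H := by
  have hS_SS : convolution Δ S (S ≫ S) = ε ≫ initial.to H :=
    calc convolution Δ S (S ≫ S)
        = convolution Δ (𝟙 H) S ≫ S := by rw [convolution_comp, Category.id_comp]
      _ = ε ≫ initial.to H := by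
        rw [convolution, hantipode_r, Category.assoc, initial.to_comp]
  calc S ≫ S
      = convolution Δ (ε ≫ initial.to H) (S ≫ S) := (convolution_counit_left Δ ε hcounit_l _).symm
    _ = convolution Δ (convolution Δ (𝟙 H) S) (S ≫ S) := by rw [← hantipode_r]; rfl
    _ = convolution Δ (𝟙 H) (convolution Δ S (S ≫ S)) := convolution_assoc Δ hcoassoc _ _ _
    _ = 𝟙 H := by rw [hS_SS, convolution, hcounit_r]

/-- For a Zhang algebra `(H, Δ, ε, S)` in a category with an initial object
and binary coproducts, the antipode is involutive: `S ∘ S = id_H`. -/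
theorem zhang_antipode_involutive
    {C : Type u} [Category.{v} C] [HasInitial C] [HasBinaryCoproducts C]
    (H : C) (Δ : H ⟶ H ⨿ H) (ε : H ⟶ ⊥_ C) (S : H ⟶ H)
    (hcoassoc : Δ ≫ coprod.map Δ (𝟙 H) ≫ (coprod.associator H H H).hom
      = Δ ≫ coprod.map (𝟙 H) Δ)
    (hcounit_l : Δ ≫ coprod.desc (ε ≫ initial.to H) (𝟙 H) = 𝟙 H)
    (hcounit_r : Δ ≫ coprod.desc (𝟙 H) (ε ≫ initial.to H) = 𝟙 H)
    (hantipode_l : Δ ≫ coprod.desc S (𝟙 H) = ε ≫ initial.to H)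
    (hantipode_r : Δ ≫ coprod.desc (𝟙 H) S = ε ≫ initial.to H) :
    S ≫ S = 𝟙 H :=
  zhang_antipode_involutive_general H Δ ε S hcoassoc hcounit_l hcounit_r hantipode_r
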